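/- arXiv:1909.08267 — 3 statements merged into one kernel-verified Lean document; each statement's English description precedes it below -/
import Mathlib

section
/- Continuous-time collision freedom from inflated discrete constraints: suppose p : ℝ → ℝⁿ is C² with ‖p''(t)‖ ≤ ā everywhere and ‖p'(t_k)‖ ≤ v̄, and suppose the discrete free-ball constraint holds with inflated margin: ‖p(t_k) − c_k‖ ≤ d_O(c_k) − d̲ − v̄·(Δt/2) − ā·(Δt²/8). Then for every t with |t − t_k| ≤ Δt/2 and every obstacle point o ∈ O, ‖p(t) − o‖ ≥ d̲. -/
/-!
The velocity can drift from `p'(t_k)` by at most `ā |t - t_k|`, so comparison with the scalar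
function `v̄ s + ā s² / 2` gives `‖p(t) - p(t_k)‖ ≤ v̄ |t - t_k| + ā (t - t_k)² / 2`,
which is at most `v̄ Δt/2 + ā Δt²/8` on the sampling window. The distance to `O` is 1-Lipschitz, so
it drops by at most `‖p(t_k) - c_k‖` plus this displacement from its value at `c_k`, and the
inflated margin leaves at least `d̲`.
-/

open Set

section Displacement

variable {E : Type*} [NormedAddCommGroup E] [NormedSpace ℝ E]

lemma norm_sub_le_of_norm_deriv_le_add_mul_sub {f f' : ℝ → E} {v a t₀ t : ℝ}
    (hf : ∀ s, HasDerivAt f (f' s) s) (hbound : ∀ s, ‖f' s‖ ≤ v + a * |s - t₀|)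
    (ht : t₀ ≤ t) :
    ‖f t - f t₀‖ ≤ v * (t - t₀) + a / 2 * (t - t₀) ^ 2 := by
  have hB : ∀ s, HasDerivAt (fun s => v * (s - t₀) + a / 2 * (s - t₀) ^ 2)
      (v + a * (s - t₀)) s := by
    intro s
    have hlin := (hasDerivAt_id' s).sub_const t₀
    exact ((hlin.const_mul v).add ((hlin.pow 2).const_mul (a / 2))).congr_deriv (by ring)
  refine image_norm_le_of_norm_deriv_right_le_deriv_boundary (f := fun s => f s - f t₀)
    (fun s _ => ((hf s).continuousAt.sub continuousAt_const).continuousWithinAt)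
    (fun s _ => ((hf s).sub_const (f t₀)).hasDerivWithinAt) (by simp) hB
    (fun s hs => ?_) ⟨ht, le_rfl⟩
  simpa only [abs_of_nonneg (sub_nonneg.2 hs.1)] using hbound s

lemma norm_sub_le_of_norm_deriv_le_add_mul_abs_sub {f f' : ℝ → E} {v a t₀ : ℝ}
    (hf : ∀ s, HasDerivAt f (f' s) s) (hbound : ∀ s, ‖f' s‖ ≤ v + a * |s - t₀|) (t : ℝ) :
    ‖f t - f t₀‖ ≤ v * |t - t₀| + a / 2 * (t - t₀) ^ 2 := by
  rcases le_total t₀ t with ht | ht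
  · rw [abs_of_nonneg (sub_nonneg.2 ht)]
    exact norm_sub_le_of_norm_deriv_le_add_mul_sub hf hbound ht
  · -- run time backwards: `s ↦ f (-s)` satisfies the same bound around `-t₀`
    have hrev := norm_sub_le_of_norm_deriv_le_add_mul_sub (f := fun s => f (-s))
      (f' := fun s => -f' (-s)) (v := v) (a := a) (t₀ := -t₀) (t := -t)
      (fun s => by simpa [Function.comp_def] using (hf (-s)).scomp s (hasDerivAt_neg s))
      (fun s => by
        rw [norm_neg, show s - -t₀ = -(-s - t₀) by ring, abs_neg]
        exact hbound (-s))
      (neg_le_neg ht)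
    rw [abs_of_nonpos (sub_nonpos.2 ht)]
    simp only [neg_neg] at hrev
    convert hrev using 2 <;> ring

lemma norm_sub_le_of_norm_iteratedDeriv_two_le {p : ℝ → E} (hp : ContDiff ℝ 2 p)
    {a v t₀ : ℝ} (ha : ∀ t, ‖iteratedDeriv 2 p t‖ ≤ a) (hv : ‖deriv p t₀‖ ≤ v) (t : ℝ) :
    ‖p t - p t₀‖ ≤ v * |t - t₀| + a / 2 * (t - t₀) ^ 2 := by
  have hp' : ContDiff ℝ 1 (deriv p) :=
    ((contDiff_succ_iff_deriv (n := 1)).mp (by exact_mod_cast hp)).2.2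
  have hvel : ∀ s, ‖deriv p s‖ ≤ v + a * |s - t₀| := by
    intro s
    have hdrift : ‖deriv p s - deriv p t₀‖ ≤ a * ‖s - t₀‖ :=
      convex_univ.norm_image_sub_le_of_norm_deriv_le
        (fun x _ => hp'.differentiable one_ne_zero x)
        (fun x _ => by simpa only [iteratedDeriv_succ, iteratedDeriv_zero] using ha x)
        (mem_univ t₀) (mem_univ s)
    calc ‖deriv p s‖ ≤ ‖deriv p t₀‖ + ‖deriv p s - deriv p t₀‖ := norm_le_norm_add_norm_sub' _ _
      _ ≤ v + a * |s - t₀| := add_le_add hv hdrift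
  exact norm_sub_le_of_norm_deriv_le_add_mul_abs_sub
    (fun s => ((hp.differentiable two_ne_zero) s).hasDerivAt) hvel t

end Displacement

lemma le_infDist_of_dist_le_infDist_sub {X : Type*} [PseudoMetricSpace X] {O : Set X}
    {c x y : X} {d r : ℝ} (hx : dist x c ≤ Metric.infDist c O - d - r) (hy : dist y x ≤ r) :
    d ≤ Metric.infDist y O := by
  linarith [Metric.infDist_le_infDist_add_dist (s := O) (x := c) (y := y),
    dist_triangle_left c y x, dist_comm x y]

lemma mul_abs_add_mul_sq_le {v a h Δ : ℝ} (hv : 0 ≤ v) (ha : 0 ≤ a) (hh : |h| ≤ Δ / 2) :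
    v * |h| + a / 2 * h ^ 2 ≤ v * (Δ / 2) + a * (Δ ^ 2 / 8) := by
  have hsq : h ^ 2 ≤ (Δ / 2) ^ 2 := sq_le_sq' (abs_le.1 hh).1 (abs_le.1 hh).2
  nlinarith [mul_le_mul_of_nonneg_left hh hv, mul_le_mul_of_nonneg_left hsq ha]

theorem continuous_time_collision_freedom_general {n : ℕ}
    (O : Set (EuclideanSpace ℝ (Fin n)))
    (dmin : ℝ)
    (p : ℝ → EuclideanSpace ℝ (Fin n))
    (hp : ContDiff ℝ 2 p)
    (abar vbar tk Δt : ℝ)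
    (ha : ∀ t : ℝ, ‖iteratedDeriv 2 p t‖ ≤ abar)
    (hv : ‖deriv p tk‖ ≤ vbar)
    (ck : EuclideanSpace ℝ (Fin n))
    (hball : ‖p tk - ck‖ ≤
      Metric.infDist ck O - dmin - vbar * (Δt / 2) - abar * (Δt ^ 2 / 8)) :
    ∀ t : ℝ, |t - tk| ≤ Δt / 2 → ∀ o ∈ O, dmin ≤ ‖p t - o‖ := by
  intro t ht o ho
  have habar : 0 ≤ abar := (norm_nonneg _).trans (ha 0)
  have hvbar : 0 ≤ vbar := (norm_nonneg _).trans hv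
  have hdisp : dist (p t) (p tk) ≤ vbar * (Δt / 2) + abar * (Δt ^ 2 / 8) := by
    rw [dist_eq_norm]
    exact (norm_sub_le_of_norm_iteratedDeriv_two_le hp ha hv t).trans
      (mul_abs_add_mul_sq_le hvbar habar ht)
  have hclear : dist (p tk) ck ≤
      Metric.infDist ck O - dmin - (vbar * (Δt / 2) + abar * (Δt ^ 2 / 8)) := by
    rw [dist_eq_norm]
    linarith
  rw [← dist_eq_norm]
  exact (le_infDist_of_dist_le_infDist_sub hclear hdisp).trans (Metric.infDist_le_dist_of_mem ho)

/-- Continuous-time collision freedom from inflated discrete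
constraints: if `p` is C² with `‖p''‖ ≤ ā`, `‖p'(t_k)‖ ≤ v̄`, and
`‖p(t_k) − c_k‖ ≤ d_O(c_k) − d̲ − v̄ Δt/2 − ā Δt²/8`, then for every `t` with
`|t − t_k| ≤ Δt/2` and every `o ∈ O`, `‖p(t) − o‖ ≥ d̲`. -/
theorem continuous_time_collision_freedom {n : ℕ}
    (O : Set (EuclideanSpace ℝ (Fin n))) (hO : O.Nonempty)
    (dmin : ℝ) (hdmin : 0 < dmin)
    (p : ℝ → EuclideanSpace ℝ (Fin n))
    (hp : ContDiff ℝ 2 p)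
    (abar vbar tk Δt : ℝ) (hΔt : 0 < Δt)
    (ha : ∀ t : ℝ, ‖iteratedDeriv 2 p t‖ ≤ abar)
    (hv : ‖deriv p tk‖ ≤ vbar)
    (ck : EuclideanSpace ℝ (Fin n))
    (hball : ‖p tk - ck‖ ≤
      Metric.infDist ck O - dmin - vbar * (Δt / 2) - abar * (Δt ^ 2 / 8)) :
    ∀ t : ℝ, |t - tk| ≤ Δt / 2 → ∀ o ∈ O, dmin ≤ ‖p t - o‖ :=
  continuous_time_collision_freedom_general O dmin p hp abar vbar tk Δt ha hv ck hball
end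

section
/- Overlap of consecutive free balls: suppose p : ℝ → ℝⁿ has ‖p'(t)‖ ≤ v̄ for all t, and consecutive time points t_k, t_{k+1} = t_k + Δt with free-ball constraints ‖p(t_k) − c_k‖ ≤ d_O(c_k) − d̲_k and ‖p(t_{k+1}) − c_{k+1}‖ ≤ d_O(c_{k+1}) − d̲_{k+1}, where d̲_k ≥ v̄·Δt/2 + d̲ and d̲_{k+1} ≥ v̄·Δt/2 + d̲. Then the midpoint position p(t_k + Δt/2) lies in both inflated-to-d̲ balls B(c_k, d_O(c_k) − d̲) and B(c_{k+1}, d_O(c_{k+1}) − d̲); in particular these two balls intersect. -/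
/-- Overlap of consecutive free balls: a `v̄`-Lipschitz
trajectory satisfying consecutive inflated free-ball constraints has its
midpoint position in both deflated-to-`d̲` balls; hence the balls intersect. -/
theorem consecutive_free_balls_overlap {n : ℕ}
    (O : Set (EuclideanSpace ℝ (Fin n))) (hO : O.Nonempty)
    (dmin Δt vbar : ℝ) (hdmin : 0 < dmin) (hΔt : 0 < Δt) (hvbar : 0 < vbar)
    (p : ℝ → EuclideanSpace ℝ (Fin n))
    (hlip : LipschitzWith (Real.toNNReal vbar) p)
    (tk : ℝ) (ck ck1 : EuclideanSpace ℝ (Fin n)) (dk dk1 : ℝ)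
    (hdk : vbar * Δt / 2 + dmin ≤ dk)
    (hdk1 : vbar * Δt / 2 + dmin ≤ dk1)
    (hballk : ‖p tk - ck‖ ≤ Metric.infDist ck O - dk)
    (hballk1 : ‖p (tk + Δt) - ck1‖ ≤ Metric.infDist ck1 O - dk1) :
    p (tk + Δt / 2) ∈ Metric.closedBall ck (Metric.infDist ck O - dmin) ∧
      p (tk + Δt / 2) ∈ Metric.closedBall ck1 (Metric.infDist ck1 O - dmin) ∧
      (Metric.closedBall ck (Metric.infDist ck O - dmin) ∩
        Metric.closedBall ck1 (Metric.infDist ck1 O - dmin)).Nonempty := by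
  have hlipd : ∀ s t : ℝ, dist (p s) (p t) ≤ vbar * dist s t := by
    intro s t
    have := hlip.dist_le_mul s t
    simpa [Real.coe_toNNReal _ hvbar.le] using this
  have hmid1 : dist (tk + Δt / 2) tk = Δt / 2 := by
    rw [Real.dist_eq]; rw [abs_of_nonneg] <;> linarith
  have hmid2 : dist (tk + Δt / 2) (tk + Δt) = Δt / 2 := by
    rw [Real.dist_eq]; rw [abs_of_nonpos] <;> linarith
  have h1 : p (tk + Δt / 2) ∈ Metric.closedBall ck (Metric.infDist ck O - dmin) := by
    rw [Metric.mem_closedBall]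
    calc dist (p (tk + Δt / 2)) ck ≤ dist (p (tk + Δt / 2)) (p tk) + dist (p tk) ck :=
          dist_triangle _ _ _
      _ ≤ vbar * (Δt / 2) + (Metric.infDist ck O - dk) := by
          have := hlipd (tk + Δt / 2) tk
          rw [hmid1] at this
          have hb : dist (p tk) ck ≤ Metric.infDist ck O - dk := by
            simpa [dist_eq_norm] using hballk
          linarith
      _ ≤ Metric.infDist ck O - dmin := by linarith
  have h2 : p (tk + Δt / 2) ∈ Metric.closedBall ck1 (Metric.infDist ck1 O - dmin) := by
    rw [Metric.mem_closedBall]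
    calc dist (p (tk + Δt / 2)) ck1 ≤ dist (p (tk + Δt / 2)) (p (tk + Δt)) + dist (p (tk + Δt)) ck1 :=
          dist_triangle _ _ _
      _ ≤ vbar * (Δt / 2) + (Metric.infDist ck1 O - dk1) := by
          have := hlipd (tk + Δt / 2) (tk + Δt)
          rw [hmid2] at this
          have hb : dist (p (tk + Δt)) ck1 ≤ Metric.infDist ck1 O - dk1 := by
            simpa [dist_eq_norm] using hballk1
          linarith
      _ ≤ Metric.infDist ck1 O - dmin := by linarith
  exact ⟨h1, h2, ⟨_, h1, h2⟩⟩
end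

section
/- A Lipschitz trajectory remaining in free balls is continuously collision free: let p : [t₀, t_N] → ℝⁿ be v̄-Lipschitz, with grid t_k = t₀ + k·Δt, and suppose ‖p(t_k) − c_k‖ ≤ d_O(c_k) − d̲ − v̄·Δt/2 for all k = 0,…,N. Then d_O(p(t)) ≥ d̲ for all t ∈ [t₀, t_N]. -/
/-! Every time `t` of the interval lies within `Δt / 2` of a grid point `t_k`, so the Lipschitz
bound gives `‖p t - c_k‖ ≤ d_O(c_k) - d̲`. Since `d_O` is `1`-Lipschitz, the ball of radius
`d_O(c_k) - d̲` around `c_k` stays at distance at least `d̲` from `O`. -/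

open Metric

theorem exists_nat_le_abs_sub_le_half {s : ℝ} {N : ℕ} (h0 : 0 ≤ s) (hN : s ≤ N) :
    ∃ k ≤ N, |s - k| ≤ 1 / 2 := by
  refine ⟨⌊s + 1 / 2⌋₊, ?_, ?_⟩
  · have : (⌊s + 1 / 2⌋₊ : ℝ) < N + 1 := by linarith [Nat.floor_le (by linarith : 0 ≤ s + 1 / 2)]
    exact Nat.lt_succ_iff.mp (by exact_mod_cast this)
  · rw [abs_le]
    constructor <;> linarith [Nat.floor_le (by linarith : 0 ≤ s + 1 / 2),
      Nat.lt_floor_add_one (s + 1 / 2)]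

theorem exists_grid_point_abs_sub_le_half {t t0 Δt : ℝ} {N : ℕ} (hΔt : 0 < Δt)
    (ht : t ∈ Set.Icc t0 (t0 + N * Δt)) : ∃ k ≤ N, |t - (t0 + k * Δt)| ≤ Δt / 2 := by
  obtain ⟨k, hkN, hk⟩ := exists_nat_le_abs_sub_le_half (s := (t - t0) / Δt) (N := N)
    (div_nonneg (by linarith [ht.1]) hΔt.le) ((div_le_iff₀ hΔt).2 (by linarith [ht.2]))
  refine ⟨k, hkN, ?_⟩
  have : t - (t0 + k * Δt) = ((t - t0) / Δt - k) * Δt := by field_simp; ring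
  rw [this, abs_mul, abs_of_pos hΔt]
  nlinarith

theorem le_infDist_of_dist_le_infDist_sub_s18 {α : Type*} [PseudoMetricSpace α] {s : Set α}
    {x c : α} {r : ℝ} (h : dist x c ≤ infDist c s - r) : r ≤ infDist x s := by
  linarith [infDist_le_infDist_add_dist (x := c) (y := x) (s := s), dist_comm x c]

theorem lipschitz_trajectory_collision_free_general {n : ℕ}
    (O : Set (EuclideanSpace ℝ (Fin n)))
    (dmin Δt vbar : ℝ) (hΔt : 0 < Δt) (hvbar : 0 < vbar)
    (N : ℕ) (t0 : ℝ)
    (p : ℝ → EuclideanSpace ℝ (Fin n))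
    (hlip : LipschitzWith (Real.toNNReal vbar) p)
    (c : ℕ → EuclideanSpace ℝ (Fin n))
    (hball : ∀ k ≤ N, ‖p (t0 + k * Δt) - c k‖ ≤
      Metric.infDist (c k) O - dmin - vbar * Δt / 2) :
    ∀ t ∈ Set.Icc t0 (t0 + N * Δt), dmin ≤ Metric.infDist (p t) O := by
  intro t ht
  obtain ⟨k, hkN, hk⟩ := exists_grid_point_abs_sub_le_half hΔt ht
  set tk := t0 + k * Δt
  have hmove : dist (p t) (p tk) ≤ vbar * (Δt / 2) := by
    have := hlip.dist_le_mul t tk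
    rw [Real.coe_toNNReal _ hvbar.le, Real.dist_eq] at this
    exact this.trans (mul_le_mul_of_nonneg_left hk hvbar.le)
  apply le_infDist_of_dist_le_infDist_sub_s18
  calc dist (p t) (c k) ≤ dist (p t) (p tk) + dist (p tk) (c k) := dist_triangle _ _ _
    _ ≤ infDist (c k) O - dmin := by
      rw [dist_eq_norm (p tk)]
      linarith [hball k hkN]

/-- A `v̄`-Lipschitz trajectory satisfying the inflated discrete
free-ball constraints on a grid with spacing `Δt` is continuously collision
free: `d_O(p(t)) ≥ d̲` on the whole interval. -/
theorem lipschitz_trajectory_collision_free {n : ℕ}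
    (O : Set (EuclideanSpace ℝ (Fin n))) (hO : O.Nonempty)
    (dmin Δt vbar : ℝ) (hdmin : 0 < dmin) (hΔt : 0 < Δt) (hvbar : 0 < vbar)
    (N : ℕ) (t0 : ℝ)
    (p : ℝ → EuclideanSpace ℝ (Fin n))
    (hlip : LipschitzWith (Real.toNNReal vbar) p)
    (c : ℕ → EuclideanSpace ℝ (Fin n))
    (hball : ∀ k ≤ N, ‖p (t0 + k * Δt) - c k‖ ≤
      Metric.infDist (c k) O - dmin - vbar * Δt / 2) :
    ∀ t ∈ Set.Icc t0 (t0 + N * Δt), dmin ≤ Metric.infDist (p t) O :=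
  lipschitz_trajectory_collision_free_general O dmin Δt vbar hΔt hvbar N t0 p hlip c hball
end
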